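/- Let Q1 be a minimal conjunctive query, let Q2 be a conjunctive query equivalent to Q1, and let h1 be a homomorphism from Q1 to Q2. Then there exists a homomorphism h2 from Q2 to Q1 that is the inverse of h1 on h1(body(Q1)), i.e., h2(h1(A)) = A for every atom A in body(Q1). -/

import Mathlib

/-- A relational atom (or fact): a relation symbol with a list of arguments.
Arguments are natural numbers, serving both as variables and as data values. -/
structure Atom where
  rel : ℕ
  args : List ℕ
deriving DecidableEq

/-- Apply a substitution to an atom. -/
def mapAtom (f : ℕ → ℕ) (A : Atom) : Atom := ⟨A.rel, A.args.map f⟩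

/-- The variables of an atom. -/
def Atom.vars (A : Atom) : Finset ℕ := A.args.toFinset

/-- The variables of a finite set of atoms. -/
def varsOf (B : Finset Atom) : Finset ℕ := B.biUnion Atom.vars

/-- A conjunctive query: a head atom and a finite set of body atoms. -/
structure CQ where
  head : Atom
  body : Finset Atom
deriving DecidableEq

/-- All variables of a conjunctive query. -/
def CQ.vars (Q : CQ) : Finset ℕ := Q.head.vars ∪ varsOf Q.body

/-- A schema: a set of relation symbols together with an arity function. -/
structure Schema where
  rels : Set ℕ
  ar : ℕ → ℕ

/-- An atom (or fact) over a schema. -/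
def atomOver (σ : Schema) (A : Atom) : Prop :=
  A.rel ∈ σ.rels ∧ A.args.length = σ.ar A.rel

/-- `Q` is a (well-formed) conjunctive query over schema `σ`:
nonempty body of σ-atoms, head relation symbol not in σ, and safety. -/
def isCQ (σ : Schema) (Q : CQ) : Prop :=
  Q.body.Nonempty ∧ (∀ A ∈ Q.body, atomOver σ A) ∧
  Q.head.rel ∉ σ.rels ∧ Q.head.vars ⊆ varsOf Q.body

/-- A database is a set of facts (finiteness is imposed where needed). -/
abbrev Database := Set Atom

/-- A database over a schema. -/
def isDBOver (σ : Schema) (D : Database) : Prop := ∀ F ∈ D, atomOver σ F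

/-- The result of a conjunctive query on a database. -/
def evalCQ (Q : CQ) (D : Database) : Set Atom :=
  { F | ∃ ν : ℕ → ℕ, (∀ A ∈ Q.body, mapAtom ν A ∈ D) ∧ mapAtom ν Q.head = F }

/-- Containment of conjunctive queries. -/
def containedCQ (Q1 Q2 : CQ) : Prop :=
  ∀ D : Database, D.Finite → evalCQ Q1 D ⊆ evalCQ Q2 D

/-- Equivalence of conjunctive queries. -/
def equivCQ (Q1 Q2 : CQ) : Prop :=
  ∀ D : Database, D.Finite → evalCQ Q1 D = evalCQ Q2 D

/-- A conjunctive query is minimal if no equivalent CQ has strictly fewer body atoms. -/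
def isMinimal (Q : CQ) : Prop :=
  ∀ Q2 : CQ, equivCQ Q Q2 → Q.body.card ≤ Q2.body.card

/-- A homomorphism from `Q2` to `Q1`. -/
def isHom (h : ℕ → ℕ) (Q2 Q1 : CQ) : Prop :=
  (∀ A ∈ Q2.body, mapAtom h A ∈ Q1.body) ∧ mapAtom h Q2.head = Q1.head

/-- A body homomorphism from `Q2` to `Q1`. -/
def isBodyHom (h : ℕ → ℕ) (Q2 Q1 : CQ) : Prop :=
  ∀ A ∈ Q2.body, mapAtom h A ∈ Q1.body

/-- A set of views over σ: each view is a CQ over σ and views have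
pairwise distinct head relation symbols. -/
def isViewSet (σ : Schema) (𝒱 : Finset CQ) : Prop :=
  (∀ V ∈ 𝒱, isCQ σ V) ∧
  ∀ V ∈ 𝒱, ∀ W ∈ 𝒱, V ≠ W → V.head.rel ≠ W.head.rel

/-- The 𝒱-defined database 𝒱(D). -/
def viewDB (𝒱 : Finset CQ) (D : Database) : Database :=
  ⋃ V ∈ 𝒱, evalCQ V D

/-- `Q'` is a CQ over the schema σ_𝒱 of the head relations of the views 𝒱. -/
def overViews (𝒱 : Finset CQ) (Q' : CQ) : Prop :=
  Q'.body.Nonempty ∧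
  (∀ A ∈ Q'.body, ∃ V ∈ 𝒱, A.rel = V.head.rel ∧ A.args.length = V.head.args.length) ∧
  (∀ V ∈ 𝒱, Q'.head.rel ≠ V.head.rel) ∧
  Q'.head.vars ⊆ varsOf Q'.body

/-- `Q'` is a 𝒱-rewriting of `Q`: `Q'` is over σ_𝒱 and `Q'(𝒱(D)) = Q(D)`
for every (finite) database `D` over σ. -/
def isRewriting (σ : Schema) (𝒱 : Finset CQ) (Q Q' : CQ) : Prop :=
  overViews 𝒱 Q' ∧
  ∀ D : Database, D.Finite → isDBOver σ D →
    evalCQ Q' (viewDB 𝒱 D) = evalCQ Q D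

/-- `T` is a join tree for the atom set `B`. -/
def joinTreeProp (B : Finset Atom) (T : SimpleGraph {A : Atom // A ∈ B}) : Prop :=
  T.IsTree ∧
  ∀ (x : ℕ) (A A' : {A : Atom // A ∈ B}) (p : T.Walk A A'), p.IsPath →
    x ∈ A.1.vars → x ∈ A'.1.vars → ∀ C ∈ p.support, x ∈ C.1.vars

/-- The atom set `B` has a join tree. -/
def hasJoinTree (B : Finset Atom) : Prop :=
  ∃ T : SimpleGraph {A : Atom // A ∈ B}, joinTreeProp B T

/-- A conjunctive query is acyclic if its body has a join tree. -/
def isAcyclicCQ (Q : CQ) : Prop := hasJoinTree Q.body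

/-- A conjunctive query is free-connex acyclic. -/
def isFreeConnex (Q : CQ) : Prop :=
  isAcyclicCQ Q ∧ hasJoinTree (insert Q.head Q.body)

/-- The bridge variables of `𝒜 ⊆ body(Q)`. -/
def bvars (Q : CQ) (𝒜 : Finset Atom) : Finset ℕ :=
  varsOf 𝒜 ∩ (Q.head.vars ∪ varsOf (Q.body \ 𝒜))

/-- An application of a view `V`: a substitution that does not unify any
quantified variable of `V` with another variable of `V`. -/
def isApplication (V : CQ) (α : ℕ → ℕ) : Prop :=
  ∀ x ∈ varsOf V.body, x ∉ V.head.vars →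
    ∀ y ∈ CQ.vars V, y ≠ x → α x ≠ α y

/-- The query α(V). -/
def applyCQ (α : ℕ → ℕ) (V : CQ) : CQ :=
  ⟨mapAtom α V.head, V.body.image (mapAtom α)⟩

/-- `(𝒜, V, α, ψ)` is a cover description for `Q`. -/
def isCoverDesc (Q : CQ) (𝒜 : Finset Atom) (V : CQ) (α ψ : ℕ → ℕ) : Prop :=
  𝒜 ⊆ Q.body ∧ isApplication V α ∧
  𝒜 ⊆ V.body.image (mapAtom α) ∧
  bvars Q 𝒜 ⊆ V.head.vars.image α ∧
  isBodyHom ψ (applyCQ α V) Q ∧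
  ∀ x ∈ varsOf 𝒜, ψ x = x

/-- A cover partition for `Q` over `𝒱`: a collection of cover descriptions
whose atom sets partition `body(Q)`. -/
def isCoverPartition (Q : CQ) (𝒱 : Finset CQ) (m : ℕ)
    (𝒜 : Fin m → Finset Atom) (V : Fin m → CQ) (α ψ : Fin m → ℕ → ℕ) : Prop :=
  (∀ i, V i ∈ 𝒱 ∧ isCoverDesc Q (𝒜 i) (V i) (α i) (ψ i)) ∧
  ∀ A ∈ Q.body, ∃! i, A ∈ 𝒜 i

/-- Consistency of a cover partition: a variable of any `α_j(V_j)` lies in the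
range of another `α_i` only if it also lies in `bvars(𝒜_j)`. -/
def isConsistent (Q : CQ) (m : ℕ) (𝒜 : Fin m → Finset Atom) (V : Fin m → CQ)
    (α : Fin m → ℕ → ℕ) : Prop :=
  ∀ i j : Fin m, i ≠ j → ∀ z ∈ CQ.vars (applyCQ (α j) (V j)),
    (∃ x ∈ CQ.vars (V i), α i x = z) → z ∈ bvars Q (𝒜 j)

/-- The query `Q_𝒞` induced by a (consistent) cover partition. -/
def inducedCQ (Q : CQ) (m : ℕ) (V : Fin m → CQ) (α : Fin m → ℕ → ℕ) : CQ :=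
  ⟨Q.head, Finset.image (fun i => mapAtom (α i) (V i).head) Finset.univ⟩

/-- Quantified variable disjointness for a family of view applications. -/
def QVD (m : ℕ) (V : Fin m → CQ) (α : Fin m → ℕ → ℕ) : Prop :=
  ∀ i j : Fin m, i ≠ j → ∀ x ∈ varsOf (V i).body, x ∉ (V i).head.vars →
    ∀ y ∈ CQ.vars (V j), α i x ≠ α j y

/-- `QE` is an expansion of `Q'` with respect to the views `𝒱`. -/
def isExpansion (𝒱 : Finset CQ) (Q' QE : CQ) : Prop :=
  ∃ (m : ℕ) (A' : Fin m → Atom) (V : Fin m → CQ) (α : Fin m → ℕ → ℕ),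
    (∀ i, V i ∈ 𝒱 ∧ isApplication (V i) (α i) ∧ A' i = mapAtom (α i) (V i).head) ∧
    Q'.body = Finset.image A' Finset.univ ∧
    QVD m V α ∧
    QE.head = Q'.head ∧
    QE.body = Finset.biUnion Finset.univ (fun i => (V i).body.image (mapAtom (α i)))

/-- `atoms(x)`: the body atoms of `Q` containing the variable `x`. -/
def atomsWith (Q : CQ) (x : ℕ) : Finset Atom :=
  Q.body.filter (fun A => x ∈ A.vars)

/-- Hierarchical conjunctive queries. -/
def isHierarchical (Q : CQ) : Prop :=
  ∀ x y : ℕ, atomsWith Q x ⊆ atomsWith Q y ∨ atomsWith Q y ⊆ atomsWith Q x ∨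
    atomsWith Q x ∩ atomsWith Q y = ∅

/-- q-hierarchical conjunctive queries. -/
def isQHierarchical (Q : CQ) : Prop :=
  isHierarchical Q ∧ ∀ x y : ℕ, atomsWith Q x ⊂ atomsWith Q y →
    x ∈ Q.head.vars → y ∈ Q.head.vars

/-- `P` is a partition of `body(Q)` witnessing weak head arity at most `k`. -/
def witnessesWHA (Q : CQ) (k n : ℕ) (P : Fin n → Finset Atom) : Prop :=
  (∀ i, (P i).Nonempty) ∧ (∀ i, P i ⊆ Q.body) ∧ (∀ A ∈ Q.body, ∃! i, A ∈ P i) ∧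
  (∀ i, (varsOf (P i) ∩ Q.head.vars).card ≤ k) ∧
  (∀ i j, i ≠ j → ∀ x ∈ varsOf (P i), x ∈ varsOf (P j) → x ∈ Q.head.vars)

/-- `Q` has weak head arity at most `k`. -/
def hasWHAle (Q : CQ) (k : ℕ) : Prop := ∃ n P, witnessesWHA Q k n P

/-- The weak head arity of `Q`. -/
noncomputable def weakHeadArity (Q : CQ) : ℕ := sInf {k | hasWHAle Q k}

/-- The cover graph of `Q`: vertices are the body atoms, with an edge between
two atoms iff they share a variable not occurring in the head. -/
def coverGraph (Q : CQ) : SimpleGraph {A : Atom // A ∈ Q.body} :=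
  SimpleGraph.fromRel (fun A B => ∃ x, x ∈ A.1.vars ∧ x ∈ B.1.vars ∧ x ∉ Q.head.vars)

/-- A subset `s` of the atom set `B` is connected in the (join) tree `T`. -/
def connectedIn (B : Finset Atom) (T : SimpleGraph {A : Atom // A ∈ B}) (s : Finset Atom) : Prop :=
  (T.induce {A : {A : Atom // A ∈ B} | A.1 ∈ s}).Connected

lemma mapAtom_comp (p q : ℕ → ℕ) (A : Atom) :
    mapAtom p (mapAtom q A) = mapAtom (p ∘ q) A := by
  simp [mapAtom, List.map_map]

lemma mapAtom_id (A : Atom) : mapAtom id A = A := by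
  simp [mapAtom]

/-- A homomorphism from `Qa` to `Qb` yields containment of `Qb` in `Qa`. -/
lemma hom_contained {h : ℕ → ℕ} {Qa Qb : CQ} (hh : isHom h Qa Qb) :
    containedCQ Qb Qa := by
  intro D _ F hF
  obtain ⟨ν, hb, hhd⟩ := hF
  refine ⟨ν ∘ h, fun A hA => ?_, ?_⟩
  · rw [← mapAtom_comp]; exact hb _ (hh.1 A hA)
  · rw [← mapAtom_comp, hh.2, hhd]

lemma mapAtom_iterate (f : ℕ → ℕ) (k : ℕ) (A : Atom) :
    (mapAtom f)^[k] A = mapAtom (f^[k]) A := by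
  induction k with
  | zero => simp [mapAtom_id]
  | succ k ih =>
      rw [Function.iterate_succ_apply', ih, mapAtom_comp,
        Function.iterate_succ']

/-- If `Q1` is a minimal CQ, `Q2` is equivalent to `Q1`, and `h1` is a
homomorphism from `Q1` to `Q2`, then there is a homomorphism `h2` from `Q2` to `Q1`
that is the inverse of `h1` on `h1(body(Q1))`. -/
theorem statement0 (σ : Schema) (Q1 Q2 : CQ) (hQ1 : isCQ σ Q1) (hQ2 : isCQ σ Q2)
    (hmin : isMinimal Q1) (hequiv : equivCQ Q1 Q2)
    (h1 : ℕ → ℕ) (hh1 : isHom h1 Q1 Q2) :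
    ∃ h2 : ℕ → ℕ, isHom h2 Q2 Q1 ∧ ∀ A ∈ Q1.body, mapAtom h2 (mapAtom h1 A) = A := by
  classical
  -- canonical database of Q1
  set D : Database := (↑Q1.body : Set Atom) with hD
  have hDfin : D.Finite := Q1.body.finite_toSet
  have hcan : Q1.head ∈ evalCQ Q1 D := by
    exact ⟨id, fun A hA => by simpa [mapAtom_id, hD] using hA, mapAtom_id _⟩
  have hcan2 : Q1.head ∈ evalCQ Q2 D := by
    rw [← hequiv D hDfin]; exact hcan
  obtain ⟨g, hgbody, hghead⟩ := hcan2
  have hgbody' : ∀ A ∈ Q2.body, mapAtom g A ∈ Q1.body := fun A hA => by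
    simpa [hD] using hgbody A hA
  -- the endomorphism f of Q1
  set f : ℕ → ℕ := g ∘ h1 with hf
  have hfbody : ∀ A ∈ Q1.body, mapAtom f A ∈ Q1.body := fun A hA => by
    rw [hf, ← mapAtom_comp]
    exact hgbody' _ (hh1.1 A hA)
  have hfhead : mapAtom f Q1.head = Q1.head := by
    rw [hf, ← mapAtom_comp, hh1.2, hghead]
  -- minimality: mapAtom f permutes the body
  have himg : Q1.body.image (mapAtom f) = Q1.body := by
    have hsub : Q1.body.image (mapAtom f) ⊆ Q1.body := by
      intro A hA
      obtain ⟨B, hB, rfl⟩ := Finset.mem_image.mp hA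
      exact hfbody B hB
    refine (Finset.eq_of_subset_of_card_le hsub ?_).symm ▸ rfl
    set Q' : CQ := ⟨Q1.head, Q1.body.image (mapAtom f)⟩ with hQ'
    have hhom1 : isHom (id : ℕ → ℕ) Q' Q1 := by
      constructor
      · intro A hA; rw [mapAtom_id]; exact hsub hA
      · exact mapAtom_id _
    have hhom2 : isHom f Q1 Q' := by
      constructor
      · intro A hA; exact Finset.mem_image_of_mem _ hA
      · exact hfhead
    have hequiv' : equivCQ Q1 Q' := fun E hE =>
      Set.Subset.antisymm (hom_contained hhom1 E hE) (hom_contained hhom2 E hE)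
    exact hmin Q' hequiv'
  -- F : body → body induced by f
  set B := Q1.body with hB
  let F : {A : Atom // A ∈ B} → {A : Atom // A ∈ B} :=
    fun a => ⟨mapAtom f a.1, hfbody a.1 a.2⟩
  have hFsurj : Function.Surjective F := by
    intro b
    have : b.1 ∈ Q1.body.image (mapAtom f) := by rw [himg]; exact b.2
    obtain ⟨A, hA, hAe⟩ := Finset.mem_image.mp this
    exact ⟨⟨A, hA⟩, Subtype.ext hAe⟩
  have hFinj : Function.Injective F :=
    (Finite.injective_iff_surjective).mpr hFsurj
  -- some iterate of F is the identity
  obtain ⟨a, b, hab, hFe⟩ :=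
    Finite.exists_ne_map_eq_of_infinite (fun k : ℕ => F^[k])
  wlog hlt : a < b generalizing a b
  · exact this b a hab.symm hFe.symm (by omega)
  set n : ℕ := b - a with hn
  have hn1 : 1 ≤ n := by omega
  have hFn : F^[n] = id := by
    have h1' : F^[a] ∘ F^[n] = F^[a] := by
      rw [← Function.iterate_add]
      have : a + n = b := by omega
      rw [this, ← hFe]
    funext x
    exact hFinj.iterate a (by
      have := congrFun h1' x
      simpa using this)
  -- relate F iterates to mapAtom iterates
  have hFit : ∀ (k : ℕ) (a : {A : Atom // A ∈ B}),
      (F^[k] a).1 = (mapAtom f)^[k] a.1 := by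
    intro k
    induction k with
    | zero => intro a; simp
    | succ k ih =>
        intro a
        rw [Function.iterate_succ_apply', Function.iterate_succ_apply', ← ih a]
  have hiter_body : ∀ (k : ℕ) (A : Atom), A ∈ B → (mapAtom f)^[k] A ∈ B := by
    intro k
    induction k with
    | zero => intro A hA; simpa using hA
    | succ k ih =>
        intro A hA
        rw [Function.iterate_succ_apply']
        exact hfbody _ (ih A hA)
  have hiter_head : ∀ k : ℕ, (mapAtom f)^[k] Q1.head = Q1.head := by
    intro k
    induction k with
    | zero => simp
    | succ k ih => rw [Function.iterate_succ_apply', ih, hfhead]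
  -- the inverse homomorphism
  refine ⟨f^[n - 1] ∘ g, ⟨fun A hA => ?_, ?_⟩, fun A hA => ?_⟩
  · rw [← mapAtom_comp, ← mapAtom_iterate]
    exact hiter_body _ _ (hgbody' A hA)
  · rw [← mapAtom_comp, hghead, ← mapAtom_iterate, hiter_head]
  · have h1e : mapAtom (f^[n - 1] ∘ g) (mapAtom h1 A) = mapAtom (f^[n]) A := by
      rw [mapAtom_comp]
      have hne : n - 1 + 1 = n := by omega
      rw [Function.comp_assoc, ← hf, ← Function.iterate_succ,
        show (n - 1).succ = n from hne]
    rw [h1e, ← mapAtom_iterate]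
    have := congrArg Subtype.val (congrFun hFn ⟨A, hA⟩)
    rw [hFit n ⟨A, hA⟩] at this
    simpa using this
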